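/- Let q ≥ 3 and let i, j, k be pairwise distinct elements of Fin q. Set α_{ijk} := a_{ii} + a_{jj} + a_{kk} − (a_{ij} + a_{jk} + a_{ki}) and β_{ijk} := b_{ii} + b_{jj} + b_{kk} − (b_{ij} + b_{jk} + b_{ki}) in V, and similarly α_{ikj}, β_{ikj} with the reversed cycle. Then T α_{ijk} = α_{ikj} and T β_{ijk} = α_{ikj} + β_{ikj}. Consequently, the 2-dimensional subspace spanned by α_{ijk} − α_{ikj} and β_{ijk} − β_{ikj} is T-invariant and the characteristic polynomial of the restriction of T to it is (X + 1)². -/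

import Mathlib

/-- Index type for the basis `{h, r} ∪ {a_{ij}} ∪ {b_{ij}}` of `Pic(Z) ⊗ ℚ`. -/
abbrev PicIdx (q : ℕ) := Unit ⊕ Unit ⊕ (Fin q × Fin q) ⊕ (Fin q × Fin q)

noncomputable section

/-- The standard basis of the free `ℚ`-vector space `V = PicIdx q → ℚ`. -/
def picBasis (q : ℕ) : Module.Basis (PicIdx q) ℚ (PicIdx q → ℚ) := Pi.basisFun ℚ (PicIdx q)

/-- The basis vector `h` (the class of a hyperplane `H`). -/
def vh (q : ℕ) : PicIdx q → ℚ := picBasis q (Sum.inl ())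

/-- The basis vector `r` (the class of the exceptional divisor `R¹`). -/
def vr (q : ℕ) : PicIdx q → ℚ := picBasis q (Sum.inr (Sum.inl ()))

/-- The basis vector `a_{ij}` (the class of the exceptional divisor `A^{ij}`). -/
def va (q : ℕ) (i j : Fin q) : PicIdx q → ℚ := picBasis q (Sum.inr (Sum.inr (Sum.inl (i, j))))

/-- The basis vector `b_{ij}` (the class of the exceptional divisor `B^{ij}`). -/
def vb (q : ℕ) (i j : Fin q) : PicIdx q → ℚ := picBasis q (Sum.inr (Sum.inr (Sum.inr (i, j))))

/-- `Σ_{k,ℓ} a_{kℓ}`. -/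
def sa (q : ℕ) : PicIdx q → ℚ := ∑ p : Fin q × Fin q, va q p.1 p.2

/-- `Σ_{k,ℓ} b_{kℓ}`. -/
def sb (q : ℕ) : PicIdx q → ℚ := ∑ p : Fin q × Fin q, vb q p.1 p.2

/-- The linear map `T = K*` on `Pic(Z) ⊗ ℚ` of Proposition 6.1, determined on the basis by
`T h = (q²−q+1)h − (q−2)r − (2q−3)Σa − (2q−2)Σb`,
`T r = (q²−q)h − (q−1)r − (2q−3)Σa − (2q−2)Σb`,
`T a_{ij} = h − b_{ji} − Σ_{(k,ℓ) : k=j ∨ ℓ=i}(a_{kℓ} + b_{kℓ})`, and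
`T b_{ij} = a_{ji} + b_{ji}`. -/
def Tpic (q : ℕ) : (PicIdx q → ℚ) →ₗ[ℚ] (PicIdx q → ℚ) :=
  (picBasis q).constr ℚ fun idx =>
    match idx with
    | Sum.inl _ =>
        ((q : ℚ) ^ 2 - q + 1) • vh q - ((q : ℚ) - 2) • vr q
          - (2 * (q : ℚ) - 3) • sa q - (2 * (q : ℚ) - 2) • sb q
    | Sum.inr (Sum.inl _) =>
        ((q : ℚ) ^ 2 - q) • vh q - ((q : ℚ) - 1) • vr q
          - (2 * (q : ℚ) - 3) • sa q - (2 * (q : ℚ) - 2) • sb q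
    | Sum.inr (Sum.inr (Sum.inl (i, j))) =>
        vh q - vb q j i
          - ∑ p ∈ Finset.univ.filter (fun p : Fin q × Fin q => p.1 = j ∨ p.2 = i),
              (va q p.1 p.2 + vb q p.1 p.2)
    | Sum.inr (Sum.inr (Sum.inr (i, j))) => va q j i + vb q j i

end

/-- `α_{ijk} = a_{ii}+a_{jj}+a_{kk} − (a_{ij}+a_{jk}+a_{ki})`. -/
noncomputable def alph3 (q : ℕ) (i j k : Fin q) : PicIdx q → ℚ :=
  va q i i + va q j j + va q k k - (va q i j + va q j k + va q k i)

/-- `β_{ijk} = b_{ii}+b_{jj}+b_{kk} − (b_{ij}+b_{jk}+b_{ki})`. -/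
noncomputable def bet3 (q : ℕ) (i j k : Fin q) : PicIdx q → ℚ :=
  vb q i i + vb q j j + vb q k k - (vb q i j + vb q j k + vb q k i)

lemma Tpic_va (q : ℕ) (i j : Fin q) :
    Tpic q (va q i j) = vh q - vb q j i
          - ∑ p ∈ Finset.univ.filter (fun p : Fin q × Fin q => p.1 = j ∨ p.2 = i),
              (va q p.1 p.2 + vb q p.1 p.2) := by
  simp [Tpic, va, Module.Basis.constr_basis]

lemma Tpic_vb (q : ℕ) (i j : Fin q) :
    Tpic q (vb q i j) = va q j i + vb q j i := by
  simp [Tpic, vb, Module.Basis.constr_basis]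

lemma filter_or_sum {q : ℕ} {M : Type*} [AddCommGroup M] (x y : Fin q) (f : Fin q × Fin q → M) :
    ∑ p ∈ Finset.univ.filter (fun p : Fin q × Fin q => p.1 = x ∨ p.2 = y), f p
      = (∑ l, f (x, l)) + (∑ t, f (t, y)) - f (x, y) := by
  have h1 : Finset.univ.filter (fun p : Fin q × Fin q => p.1 = x ∨ p.2 = y)
      = Finset.univ.filter (fun p : Fin q × Fin q => p.1 = x)
        ∪ Finset.univ.filter (fun p : Fin q × Fin q => p.2 = y) := by
    rw [← Finset.filter_or]
  have h2 : Finset.univ.filter (fun p : Fin q × Fin q => p.1 = x)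
        ∩ Finset.univ.filter (fun p : Fin q × Fin q => p.2 = y) = {(x, y)} := by
    rw [← Finset.filter_and]
    ext p
    simp [Prod.ext_iff]
  have h3 := Finset.sum_union_inter (s₁ := Finset.univ.filter (fun p : Fin q × Fin q => p.1 = x))
    (s₂ := Finset.univ.filter (fun p : Fin q × Fin q => p.2 = y)) (f := f)
  rw [h2, Finset.sum_singleton] at h3
  have h4 : ∑ p ∈ Finset.univ.filter (fun p : Fin q × Fin q => p.1 = x), f p = ∑ l, f (x, l) := by
    rw [Finset.sum_filter, Fintype.sum_prod_type, Finset.sum_comm]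
    simp
  have h5 : ∑ p ∈ Finset.univ.filter (fun p : Fin q × Fin q => p.2 = y), f p = ∑ t, f (t, y) := by
    rw [Finset.sum_filter, Fintype.sum_prod_type]
    simp
  rw [h1]
  rw [eq_sub_iff_add_eq, h3, h4, h5]

lemma Tpic_alph3 (q : ℕ) (i j k : Fin q) : Tpic q (alph3 q i j k) = alph3 q i k j := by
  simp only [alph3, map_add, map_sub, Tpic_va, filter_or_sum]
  abel

lemma Tpic_bet3 (q : ℕ) (i j k : Fin q) :
    Tpic q (bet3 q i j k) = alph3 q i k j + bet3 q i k j := by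
  simp only [alph3, bet3, map_add, map_sub, Tpic_vb]
  abel

lemma lin_indep (q : ℕ) (i j k : Fin q) (hij : i ≠ j) (hjk : j ≠ k) (hik : i ≠ k) :
    LinearIndependent ℚ ![alph3 q i j k - alph3 q i k j, bet3 q i j k - bet3 q i k j] := by
  rw [LinearIndependent.pair_iff]
  intro s t hst
  have h1 := congrFun hst (Sum.inr (Sum.inr (Sum.inl (i, j))))
  have h2 := congrFun hst (Sum.inr (Sum.inr (Sum.inr (i, j))))
  simp [alph3, bet3, va, vb, picBasis, Pi.single_apply, Prod.ext_iff,
    hij, hjk, hik, hij.symm, hjk.symm, hik.symm, Ne.symm] at h1 h2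
  exact ⟨h1, h2⟩

open Polynomial in
lemma charpoly_two : (!![(-1 : ℚ), -1; 0, -1]).charpoly = (X + 1) ^ 2 := by
  rw [Matrix.charpoly, Matrix.det_fin_two]
  simp [Matrix.charmatrix_apply_eq, Matrix.charmatrix_apply_ne]
  ring

open Polynomial in
/-- For pairwise distinct `i, j, k`, one has `T α_{ijk} = α_{ikj}` and
`T β_{ijk} = α_{ikj} + β_{ikj}`; the plane spanned by `α_{ijk} − α_{ikj}` and
`β_{ijk} − β_{ikj}` is `T`-invariant and the characteristic polynomial of the
restriction of `T` to it is `(X+1)²`. -/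
theorem Tpic_invariant_Sijk (q : ℕ) (hq : 3 ≤ q) (i j k : Fin q)
    (hij : i ≠ j) (hjk : j ≠ k) (hik : i ≠ k) :
    Tpic q (alph3 q i j k) = alph3 q i k j ∧
    Tpic q (bet3 q i j k) = alph3 q i k j + bet3 q i k j ∧
    ∃ hW : ∀ x ∈ Submodule.span ℚ
        {alph3 q i j k - alph3 q i k j, bet3 q i j k - bet3 q i k j},
        Tpic q x ∈ Submodule.span ℚ
        {alph3 q i j k - alph3 q i k j, bet3 q i j k - bet3 q i k j},
      ((Tpic q).restrict hW).charpoly = (X + 1) ^ 2 := by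
  refine ⟨Tpic_alph3 q i j k, Tpic_bet3 q i j k, ?_⟩
  set u := alph3 q i j k - alph3 q i k j with hu
  set v := bet3 q i j k - bet3 q i k j with hv
  have hTu : Tpic q u = -u := by
    simp only [hu, map_sub, Tpic_alph3]; abel
  have hTv : Tpic q v = -u - v := by
    simp only [hu, hv, map_sub, Tpic_bet3]; abel
  set U := Submodule.span ℚ ({u, v} : Set (PicIdx q → ℚ)) with hU
  have hu' : u ∈ U := Submodule.subset_span (by left; rfl)
  have hv' : v ∈ U := Submodule.subset_span (by right; rfl)
  have hW : ∀ x ∈ U, Tpic q x ∈ U := by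
    have hle : U ≤ U.comap (Tpic q) := by
      rw [hU, Submodule.span_le]
      rintro x (rfl | rfl)
      · exact Submodule.mem_comap.mpr (by rw [hTu]; exact neg_mem hu')
      · exact Submodule.mem_comap.mpr (by rw [hTv]; exact sub_mem (neg_mem hu') hv')
    exact fun x hx => hle hx
  refine ⟨hW, ?_⟩
  have li := lin_indep q i j k hij hjk hik
  set w : Fin 2 → U := ![⟨u, hu'⟩, ⟨v, hv'⟩] with hw
  have hcomp : (U.subtype ∘ w) = ![u, v] := by
    funext n; fin_cases n <;> rfl
  have liw : LinearIndependent ℚ w := by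
    apply LinearIndependent.of_comp U.subtype
    rw [hcomp]; exact li
  have hspan : ⊤ ≤ Submodule.span ℚ (Set.range w) := by
    rintro ⟨x, hx⟩ -
    rcases Submodule.mem_span_pair.mp hx with ⟨a, b, hab⟩
    have hx2 : (⟨x, hx⟩ : U) = a • w 0 + b • w 1 := Subtype.ext (by simp [hw]; exact hab.symm)
    rw [hx2]
    exact add_mem (Submodule.smul_mem _ _ (Submodule.subset_span ⟨0, rfl⟩))
      (Submodule.smul_mem _ _ (Submodule.subset_span ⟨1, rfl⟩))
  let B : Module.Basis (Fin 2) ℚ U := Module.Basis.mk liw hspan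
  haveI : Module.Finite ℚ U := Module.Finite.of_basis B
  haveI : Module.Free ℚ U := Module.Free.of_basis B
  rw [← LinearMap.charpoly_toMatrix ((Tpic q).restrict hW) B]
  have hB0 : (Tpic q).restrict hW (B 0) = -(B 0) := by
    apply Subtype.ext
    simp [LinearMap.restrict_apply, B, Module.Basis.mk_apply, hw, hTu]
  have hB1 : (Tpic q).restrict hW (B 1) = -(B 0) - B 1 := by
    apply Subtype.ext
    simp [LinearMap.restrict_apply, B, Module.Basis.mk_apply, hw, hTv]
  have hM : LinearMap.toMatrix B B ((Tpic q).restrict hW) = !![(-1 : ℚ), -1; 0, -1] := by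
    ext r c
    fin_cases r <;> fin_cases c <;>
      simp [LinearMap.toMatrix_apply, hB0, hB1, Finsupp.single_apply]
  rw [hM, charpoly_two]
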